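/- arXiv:math/0308200 — 2 statements merged into one kernel-verified Lean document; each statement's English description precedes it below -/
import Mathlib

section
/- Let G be a finite group acting on a type U, and fix g ∈ G. Let C(g) be the centralizer of g in G. Then the natural map from U^g/C(g) to the G-orbits in the inertia set ΛU = {(x,h) : h·x = x} that map to the conjugacy class of g, given by sending the C(g)-orbit of x to the G-orbit of (x,g), is a bijection. -/
variable {G U : Type*}

/-- The inertia set `ΛU = {(x,h) : h • x = x}`. -/
def InertiaSet (G U : Type*) [Group G] [MulAction G U] : Type _ :=
  {p : U × G // p.2 • p.1 = p.1}

instance InertiaSet.instSMul [Group G] [MulAction G U] : SMul G (InertiaSet G U) :=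
  ⟨fun h p => ⟨(h • p.1.1, h * p.1.2 * h⁻¹), by
    have hp := p.2
    show (h * p.1.2 * h⁻¹) • (h • p.1.1) = h • p.1.1
    rw [mul_smul, mul_smul, inv_smul_smul, hp]⟩⟩

/-- `G` acts on `ΛU` by `k • (x, h) = (k • x, k h k⁻¹)`. -/
instance InertiaSet.instMulAction [Group G] [MulAction G U] :
    MulAction G (InertiaSet G U) where
  one_smul p := Subtype.ext (by
    show ((1 : G) • p.1.1, (1 : G) * p.1.2 * (1 : G)⁻¹) = p.1
    simp)
  mul_smul h k p := Subtype.ext (by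
    show ((h * k) • p.1.1, (h * k) * p.1.2 * (h * k)⁻¹)
      = (h • k • p.1.1, h * (k * p.1.2 * k⁻¹) * h⁻¹)
    simp [mul_smul, mul_assoc])

/-- The fixed-point set `U^g`. -/
def FixedSet (U : Type*) [Group G] [MulAction G U] (g : G) : Type _ :=
  {x : U // g • x = x}

/-- The centralizer `C(g)` acts on `U^g`. -/
instance FixedSet.instSMul [Group G] [MulAction G U] (g : G) :
    SMul (Subgroup.centralizer ({g} : Set G)) (FixedSet U g) :=
  ⟨fun c x => ⟨(c : G) • x.1, by
    have hc : g * (c : G) = (c : G) * g :=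
      (Subgroup.mem_centralizer_iff.mp c.2) g (Set.mem_singleton g)
    calc g • (c : G) • x.1 = (g * (c : G)) • x.1 := (mul_smul _ _ _).symm
    _ = ((c : G) * g) • x.1 := by rw [hc]
    _ = (c : G) • g • x.1 := mul_smul _ _ _
    _ = (c : G) • x.1 := by rw [x.2]⟩⟩

instance FixedSet.instMulAction [Group G] [MulAction G U] (g : G) :
    MulAction (Subgroup.centralizer ({g} : Set G)) (FixedSet U g) where
  one_smul x := Subtype.ext (by
    show ((1 : Subgroup.centralizer ({g} : Set G)) : G) • x.1 = x.1
    simp)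
  mul_smul c d x := Subtype.ext (by
    show ((c * d : Subgroup.centralizer ({g} : Set G)) : G) • x.1
      = (c : G) • (d : G) • x.1
    simp [mul_smul])

/-- Let `G` be a finite group acting on `U` and `g ∈ G`.  The natural
map `U^g/C(g) → (ΛU/G)`, sending the `C(g)`-orbit of `x` to the `G`-orbit of `(x,g)`,
is a bijection onto the set of `G`-orbits in `ΛU` whose twisting element is conjugate
to `g`. -/
theorem fixed_mod_centralizer_equiv_twisted_sector
    [Group G] [Finite G] [MulAction G U] (g : G) :
    ∃ e : Quotient (MulAction.orbitRel (Subgroup.centralizer ({g} : Set G)) (FixedSet U g)) ≃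
        {q : Quotient (MulAction.orbitRel G (InertiaSet G U)) //
          ∃ p : InertiaSet G U, Quotient.mk _ p = q ∧ IsConj g p.1.2},
      ∀ x : FixedSet U g,
        (e (Quotient.mk _ x) : Quotient (MulAction.orbitRel G (InertiaSet G U)))
          = Quotient.mk _ (⟨(x.1, g), x.2⟩ : InertiaSet G U) := by
  classical
  set C := Subgroup.centralizer ({g} : Set G) with hC
  let T := {q : Quotient (MulAction.orbitRel G (InertiaSet G U)) //
          ∃ p : InertiaSet G U, Quotient.mk _ p = q ∧ IsConj g p.1.2}
  let f0 : FixedSet U g → T := fun x =>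
    ⟨Quotient.mk _ (⟨(x.1, g), x.2⟩ : InertiaSet G U),
      ⟨⟨(x.1, g), x.2⟩, rfl, IsConj.refl g⟩⟩
  have hwd : ∀ x y : FixedSet U g,
      MulAction.orbitRel C (FixedSet U g) x y → f0 x = f0 y := by
    intro x y hxy
    obtain ⟨c, hc⟩ := hxy
    have hcg : g * (c : G) = (c : G) * g :=
      (Subgroup.mem_centralizer_iff.mp c.2) g (Set.mem_singleton g)
    apply Subtype.ext
    apply Quotient.sound
    refine ⟨(c : G), ?_⟩
    apply Subtype.ext
    show ((c : G) • y.1, (c : G) * g * (c : G)⁻¹) = (x.1, g)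
    have h1 : (c : G) • y.1 = x.1 := congrArg Subtype.val hc
    have h2 : (c : G) * g * (c : G)⁻¹ = g := by
      rw [← hcg]; group
    rw [h1, h2]
  let f : Quotient (MulAction.orbitRel C (FixedSet U g)) → T :=
    Quotient.lift f0 hwd
  have hinj : Function.Injective f := by
    intro a b
    induction a using Quotient.inductionOn with | h x =>
    induction b using Quotient.inductionOn with | h y =>
    intro hxy
    have : Quotient.mk (MulAction.orbitRel G (InertiaSet G U))
        (⟨(x.1, g), x.2⟩ : InertiaSet G U)
        = Quotient.mk _ (⟨(y.1, g), y.2⟩ : InertiaSet G U) :=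
      congrArg Subtype.val hxy
    obtain ⟨k, hk⟩ := Quotient.exact this
    have hk' : ((k : G) • y.1, (k : G) * g * (k : G)⁻¹) = (x.1, g) :=
      congrArg Subtype.val hk
    have hk1 : (k : G) • y.1 = x.1 := congrArg Prod.fst hk'
    have hk2 : (k : G) * g * (k : G)⁻¹ = g := congrArg Prod.snd hk'
    have hkc : k ∈ C := by
      rw [hC, Subgroup.mem_centralizer_iff]
      intro h hh
      rw [Set.mem_singleton_iff] at hh
      subst hh
      have := hk2
      calc h * k = (k * h * k⁻¹) * k := by rw [this]
        _ = k * h := by group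
    apply Quotient.sound
    exact ⟨⟨k, hkc⟩, Subtype.ext hk1⟩
  have hsurj : Function.Surjective f := by
    rintro ⟨q, p, hpq, hconj⟩
    obtain ⟨k, hk'⟩ := isConj_iff.mp hconj
    have hx : g • (k⁻¹ • p.1.1) = k⁻¹ • p.1.1 := by
      have hp := p.2
      have : (k⁻¹ * p.1.2 * k) • (k⁻¹ • p.1.1) = k⁻¹ • p.1.1 := by
        rw [mul_smul, mul_smul, smul_inv_smul, hp]
      rw [← hk'] at this
      rwa [show (k⁻¹ * (k * g * k⁻¹) * k) = g by group
        ] at this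
    refine ⟨Quotient.mk _ (⟨(k⁻¹ • p.1.1 : U), hx⟩ : FixedSet U g), ?_⟩
    apply Subtype.ext
    show Quotient.mk _ (⟨(k⁻¹ • p.1.1, g), hx⟩ : InertiaSet G U) = q
    rw [← hpq]
    apply Quotient.sound
    refine ⟨k⁻¹, ?_⟩
    apply Subtype.ext
    show (k⁻¹ • p.1.1, k⁻¹ * p.1.2 * k⁻¹⁻¹) = (k⁻¹ • p.1.1, g)
    have : k⁻¹ * p.1.2 * k⁻¹⁻¹ = g := by
      rw [← hk']; group
    rw [this]
  refine ⟨Equiv.ofBijective f ⟨hinj, hsurj⟩, fun x => rfl⟩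
end

section
/- Let G be a finite group acting on a finite type U, and let ΛU = {(x,g) : g·x = x} be the inertia set. Then |ΛU/G| = Σ over conjugacy classes (g) of G of |U^g/C(g)|, where U^g is the set of points fixed by g and C(g) is the centralizer of g. -/
variable {G U : Type*}

section Aux

variable [Group G] [MulAction G U]

def inertiaProj : Quotient (MulAction.orbitRel G (InertiaSet G U)) → ConjClasses G :=
  Quotient.lift (fun p => ConjClasses.mk p.1.2) (by
    intro a b hab
    obtain ⟨h, rfl⟩ := hab
    show ConjClasses.mk (h * b.1.2 * h⁻¹) = ConjClasses.mk b.1.2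
    exact ConjClasses.mk_eq_mk_iff_isConj.mpr (isConj_iff.mpr ⟨h, rfl⟩).symm)

def fiberMap (g : G) :
    Quotient (MulAction.orbitRel (Subgroup.centralizer ({g} : Set G)) (FixedSet U g)) →
      {q : Quotient (MulAction.orbitRel G (InertiaSet G U)) // inertiaProj q = ConjClasses.mk g} :=
  Quotient.lift
    (fun x => ⟨Quotient.mk _ (⟨(x.1, g), x.2⟩ : InertiaSet G U), rfl⟩)
    (by
      intro a b hab
      obtain ⟨c, rfl⟩ := hab
      refine Subtype.ext (Quotient.sound ⟨(c : G), ?_⟩)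
      exact Subtype.ext (by
        show ((c : G) • b.1, (c : G) * g * (c : G)⁻¹) = ((c : G) • b.1, g)
        have hc : g * (c : G) = (c : G) * g :=
          (Subgroup.mem_centralizer_iff.mp c.2) g (Set.mem_singleton g)
        rw [← hc, mul_inv_cancel_right]))

lemma fiberMap_bijective (g : G) : Function.Bijective (fiberMap (G := G) (U := U) g) := by
  constructor
  · rintro ⟨a⟩ ⟨b⟩ hab
    have h1 : (Quotient.mk _ (⟨(a.1, g), a.2⟩ : InertiaSet G U) :
        Quotient (MulAction.orbitRel G (InertiaSet G U))) = Quotient.mk _ ⟨(b.1, g), b.2⟩ :=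
      congrArg Subtype.val hab
    obtain ⟨h, hh⟩ := Quotient.exact h1
    have hh' : (h • b.1, h * g * h⁻¹) = (a.1, g) := congrArg Subtype.val hh
    have h2 : h • b.1 = a.1 := congrArg Prod.fst hh'
    have h3 : h * g * h⁻¹ = g := congrArg Prod.snd hh'
    have hcent : h ∈ Subgroup.centralizer ({g} : Set G) := by
      rw [Subgroup.mem_centralizer_iff]
      intro y hy
      rw [Set.mem_singleton_iff] at hy
      subst hy
      exact (mul_inv_eq_iff_eq_mul.mp h3).symm
    apply Quotient.sound
    exact ⟨⟨h, hcent⟩, Subtype.ext h2⟩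
  · rintro ⟨q, hq⟩
    obtain ⟨p⟩ := q
    have hq' : ConjClasses.mk p.1.2 = ConjClasses.mk g := hq
    obtain ⟨c, hc⟩ := isConj_iff.mp (ConjClasses.mk_eq_mk_iff_isConj.mp hq').symm
    -- hc : c * g * c⁻¹ = p.1.2
    have hfix : g • (c⁻¹ • p.1.1) = c⁻¹ • p.1.1 := by
      have hp := p.2
      have key : (c⁻¹ * p.1.2 * c) • (c⁻¹ • p.1.1) = c⁻¹ • p.1.1 := by
        rw [mul_smul, mul_smul, smul_inv_smul, hp]
      have hg : g = c⁻¹ * p.1.2 * c := by rw [← hc]; group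
      rw [hg]; exact key
    refine ⟨Quotient.mk _ ⟨(⟨c⁻¹ • p.1.1, hfix⟩ : FixedSet U g).1, hfix⟩, ?_⟩
    refine Subtype.ext ?_
    show (Quotient.mk _ (⟨(c⁻¹ • p.1.1, g), hfix⟩ : InertiaSet G U) :
        Quotient (MulAction.orbitRel G (InertiaSet G U))) = Quotient.mk _ p
    apply Quotient.sound
    refine ⟨c⁻¹, Subtype.ext ?_⟩
    show (c⁻¹ • p.1.1, c⁻¹ * p.1.2 * c⁻¹⁻¹) = (c⁻¹ • p.1.1, g)
    rw [← hc]
    congr 1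
    group

end Aux

/-- For a finite group `G` acting on a finite type `U`, the set of
`G`-orbits of the inertia set `ΛU` is finite and
`|ΛU/G| = Σ_{(g) ∈ Conj(G)} |U^g/C(g)|`. -/
theorem card_inertia_orbits_eq_sum_over_conj_classes
    [Group G] [Fintype G] [DecidableEq G] [Fintype U] [MulAction G U] :
    ∃ f : ConjClasses G → ℕ,
      (∀ g : G, f (ConjClasses.mk g) =
        Nat.card (Quotient (MulAction.orbitRel
          (Subgroup.centralizer ({g} : Set G)) (FixedSet U g)))) ∧
      Nat.card (Quotient (MulAction.orbitRel G (InertiaSet G U)))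
        = ∑ c : ConjClasses G, f c := by
  classical
  refine ⟨fun c => Nat.card {q : Quotient (MulAction.orbitRel G (InertiaSet G U)) //
      inertiaProj q = c}, ?_, ?_⟩
  · intro g
    exact (Nat.card_congr (Equiv.ofBijective _ (fiberMap_bijective (G := G) (U := U) g))).symm
  · rw [← Nat.card_congr (Equiv.sigmaFiberEquiv (inertiaProj (G := G) (U := U)))]
    haveI : Finite (InertiaSet G U) :=
      inferInstanceAs (Finite {p : U × G // p.2 • p.1 = p.1})
    letI : Fintype (Quotient (MulAction.orbitRel G (InertiaSet G U))) := Fintype.ofFinite _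
    letI : ∀ c : ConjClasses G, Fintype {q : Quotient (MulAction.orbitRel G (InertiaSet G U)) //
        inertiaProj q = c} := fun c => Fintype.ofFinite _
    simp only [Nat.card_eq_fintype_card, Fintype.card_sigma]
end
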